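/- arXiv:1709.00474 — 2 statements merged into one kernel-verified Lean document; each statement's English description precedes it below -/
import Mathlib

section
/- Let G be a finite simple graph that is not complete, let G be chordal, and let d be the largest cardinality of a clique in G. Then b_i ≤ b_j for all indices i, j with κ̃(G) < j ≤ i ≤ d; that is, the b-vector of G is nonincreasing on indices greater than κ̃(G). -/
open Finset

/-- `G` is chordal: every cycle of length at least 4 has a chord, i.e. an edge
joining two non-consecutive vertices of the cycle. -/
def IsChordal {V : Type*} (G : SimpleGraph V) : Prop :=
  ∀ (n : ℕ), 4 ≤ n → ∀ f : ZMod n → V, Function.Injective f →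
    (∀ i : ZMod n, G.Adj (f i) (f (i + 1))) →
    ∃ i j : ZMod n, i ≠ j ∧ i + 1 ≠ j ∧ j + 1 ≠ i ∧ G.Adj (f i) (f j)

/-- The number of cliques of `G` with exactly `i` vertices. -/
noncomputable def cliqueCount {V : Type*} [Fintype V] (G : SimpleGraph V) (i : ℕ) : ℕ :=
  {s : Finset V | G.IsNClique i s}.ncard

/-- `W(G - Y)`: the number of connected components of the subgraph of `G` induced on the
complement of `Y`. -/
noncomputable def numComponents {V : Type*} [Fintype V] [DecidableEq V] (G : SimpleGraph V)
    (Y : Finset V) : ℕ :=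
  Nat.card (G.induce (↑(Yᶜ) : Set V)).ConnectedComponent

/-- A vertex-cut of `G`: a set of vertices whose removal disconnects `G`. -/
def IsVertexCut {V : Type*} [Fintype V] [DecidableEq V] (G : SimpleGraph V) (Y : Finset V) :
    Prop :=
  ¬ (G.induce (↑(Yᶜ) : Set V)).Connected

/-- The vertex connectivity `κ(G)`: the minimum cardinality of a vertex-cut. -/
noncomputable def vertexConnectivity {V : Type*} [Fintype V] [DecidableEq V]
    (G : SimpleGraph V) : ℕ :=
  sInf {k | ∃ Y : Finset V, IsVertexCut G Y ∧ Y.card = k}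

/-- `s` is a maximal clique of `G`. -/
def IsMaxCliqueOf {V : Type*} (G : SimpleGraph V) (s : Finset V) : Prop :=
  G.IsClique (↑s : Set V) ∧ ∀ t : Finset V, G.IsClique (↑t : Set V) → s ⊆ t → s = t

/-- A dominating `i`-clique of `G`: a set of `i`-cliques such that every maximal clique of
order at least `i` contains some member of the set. -/
def IsDominatingCliqueSet {V : Type*} (G : SimpleGraph V) (i : ℕ)
    (D : Finset (Finset V)) : Prop :=
  (∀ s ∈ D, G.IsNClique i s) ∧
    ∀ t : Finset V, IsMaxCliqueOf G t → i ≤ t.card → ∃ s ∈ D, s ⊆ t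

/-- `d_i(G)`: the minimum cardinality of a dominating `i`-clique of `G`. -/
noncomputable def domNum {V : Type*} (G : SimpleGraph V) (i : ℕ) : ℕ :=
  sInf {k | ∃ D : Finset (Finset V), IsDominatingCliqueSet G i D ∧ D.card = k}

/-- `κ̃(G)`: the maximum cardinality of the intersection of a pair of distinct maximal
cliques of `G`. -/
noncomputable def kappaTilde {V : Type*} [DecidableEq V] (G : SimpleGraph V) : ℕ :=
  sSup {k | ∃ C C' : Finset V, IsMaxCliqueOf G C ∧ IsMaxCliqueOf G C' ∧ C ≠ C' ∧
    (C ∩ C').card = k}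

/-- `G` restricted to the vertex set `s` is a threshold graph: it can be built from a
one-vertex graph by repeatedly adding either an isolated vertex or a vertex adjacent to
all existing vertices. -/
inductive IsThresholdOn {V : Type*} [DecidableEq V] (G : SimpleGraph V) : Finset V → Prop
  | single (v : V) : IsThresholdOn G {v}
  | isolated (s : Finset V) (v : V) (hv : v ∉ s) (hs : IsThresholdOn G s)
      (hiso : ∀ u ∈ s, ¬ G.Adj v u) : IsThresholdOn G (insert v s)
  | dominating (s : Finset V) (v : V) (hv : v ∉ s) (hs : IsThresholdOn G s)
      (hdom : ∀ u ∈ s, G.Adj v u) : IsThresholdOn G (insert v s)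

/-- `G` is a threshold graph. -/
def IsThreshold {V : Type*} [Fintype V] [DecidableEq V] (G : SimpleGraph V) : Prop :=
  IsThresholdOn G Finset.univ

/-- `|C_i(G)|`: the number of maximal cliques of `G` with exactly `i` vertices. -/
noncomputable def maxCliqueCount {V : Type*} [Fintype V] (G : SimpleGraph V) (i : ℕ) : ℕ :=
  {s : Finset V | IsMaxCliqueOf G s ∧ s.card = i}.ncard

/-- `s` is a maximal clique of `G` among the cliques contained in `W`, i.e. a facet of the
restriction of the clique complex of `G` to `W`. -/
def IsMaxCliqueWithin {V : Type*} (G : SimpleGraph V) (W : Finset V) (s : Finset V) : Prop :=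
  s ⊆ W ∧ G.IsClique (↑s : Set V) ∧
    ∀ t : Finset V, t ⊆ W → G.IsClique (↑t : Set V) → s ⊆ t → s = t

/-- The restriction of the clique complex of `G` to `W` is pure: all its facets have the
same cardinality. -/
def PureOn {V : Type*} (G : SimpleGraph V) (W : Finset V) : Prop :=
  ∀ s t : Finset V, IsMaxCliqueWithin G W s → IsMaxCliqueWithin G W t → s.card = t.card

/-!
A chordal graph has a perfect elimination order `e`: by Dirac's lemma a non-complete chordal
graph has two non-adjacent simplicial vertices, one on each side of a minimal separator, which
is a clique. Every clique is its `e`-last vertex `v` together with a subset of the earlier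
neighbours `N⁻(v)` of `v`, and these form a clique; hence `∑ c_k x^(k-1) = ∑_v (x+1)^|N⁻(v)|`,
so `b_k` counts the vertices `v` with `|N⁻(v)| = k - 1`. Sending such a `v` to a maximal clique
containing `v` and `N⁻(v)` is injective, so `b_i` is at most the number of maximal cliques with
at least `i` vertices. Conversely, for `j > κ̃(G)` every maximal clique with at least `j`
vertices contains some `v` with `N⁻(v)` inside it and `|N⁻(v)| = j - 1`; no other maximal
clique contains these `j` vertices, so this is injective as well.
-/

namespace SimpleGraph

variable {V : Type*} {G : SimpleGraph V}

def ReachIn (G : SimpleGraph V) (A : Finset V) : V → V → Prop :=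
  Relation.ReflTransGen fun u v => u ∈ A ∧ v ∈ A ∧ G.Adj u v

lemma ReachIn.symm {A : Finset V} {u v : V} (h : G.ReachIn A u v) : G.ReachIn A v u := by
  induction h with
  | refl => exact .refl
  | tail _ st ih => exact .head ⟨st.2.1, st.1, st.2.2.symm⟩ ih

lemma ReachIn.mono {A B : Finset V} (hAB : A ⊆ B) {u v : V} (h : G.ReachIn A u v) :
    G.ReachIn B u v :=
  Relation.ReflTransGen.mono (fun _ _ h => ⟨hAB h.1, hAB h.2.1, h.2.2⟩) _ _ h

open scoped Classical in
noncomputable def componentIn (G : SimpleGraph V) (A : Finset V) (a : V) : Finset V :=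
  A.filter (G.ReachIn A a)

section Components

variable {A : Finset V} {a b u v : V}

@[simp]
lemma mem_componentIn : u ∈ G.componentIn A a ↔ u ∈ A ∧ G.ReachIn A a u := by
  classical
  simp [componentIn]

lemma componentIn_subset : G.componentIn A a ⊆ A := fun _ h => (mem_componentIn.1 h).1

lemma mem_componentIn_self (ha : a ∈ A) : a ∈ G.componentIn A a :=
  mem_componentIn.2 ⟨ha, .refl⟩

lemma mem_componentIn_of_adj (hu : u ∈ G.componentIn A a) (hv : v ∈ A) (huv : G.Adj u v) :
    v ∈ G.componentIn A a :=
  mem_componentIn.2 ⟨hv, (mem_componentIn.1 hu).2.tail ⟨(mem_componentIn.1 hu).1, hv, huv⟩⟩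

lemma ne_and_not_adj_of_mem_componentIn (hab : ¬ G.ReachIn A a b) (hu : u ∈ G.componentIn A a)
    (hv : v ∈ G.componentIn A b) : u ≠ v ∧ ¬ G.Adj u v := by
  have hbv := (mem_componentIn.1 hv).2
  refine ⟨fun huv => ?_, fun huv => ?_⟩
  · subst huv
    exact hab ((mem_componentIn.1 hu).2.trans hbv.symm)
  · exact hab ((mem_componentIn.1 (mem_componentIn_of_adj hu (componentIn_subset hv) huv)).2.trans
      hbv.symm)

lemma reachIn_componentIn (hu : u ∈ G.componentIn A a) (hv : v ∈ G.componentIn A a) :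
    G.ReachIn (G.componentIn A a) u v := by
  have huv : G.ReachIn A u v := (mem_componentIn.1 hu).2.symm.trans (mem_componentIn.1 hv).2
  induction huv with
  | refl => exact .refl
  | @tail c w huc st ih =>
    have hc : c ∈ G.componentIn A a := mem_componentIn.2 ⟨st.1, (mem_componentIn.1 hu).2.trans huc⟩
    exact (ih hc).tail ⟨hc, mem_componentIn_of_adj hc st.2.1 st.2.2, st.2.2⟩

lemma exists_adj_of_reachIn_insert {s : V} [DecidableEq V] (ha : a ∈ A)
    (hab : ¬ G.ReachIn A a b) (h : G.ReachIn (insert s A) a b) :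
    ∃ u ∈ G.componentIn A a, G.Adj u s := by
  suffices ∀ w, G.ReachIn (insert s A) a w →
      w ∈ G.componentIn A a ∨ ∃ u ∈ G.componentIn A a, G.Adj u s from
    (this b h).resolve_left fun hb => hab (mem_componentIn.1 hb).2
  intro w hw
  induction hw with
  | refl => exact .inl (mem_componentIn_self ha)
  | @tail c w _ st ih =>
    refine ih.elim (fun hc => ?_) .inr
    by_cases hws : w = s
    · exact .inr ⟨c, hc, hws ▸ st.2.2⟩
    · exact .inl (mem_componentIn_of_adj hc ((mem_insert.1 st.2.1).resolve_left hws) st.2.2)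

end Components

structure IsWalkIn (G : SimpleGraph V) (A : Finset V) (x y : V) (p : ℕ → V) (n : ℕ) : Prop where
  start : p 0 = x
  finish : p n = y
  mem : ∀ k, 0 < k → k < n → p k ∈ A
  adj : ∀ k < n, G.Adj (p k) (p (k + 1))

structure IsInducedPathIn (G : SimpleGraph V) (A : Finset V) (x y : V) (p : ℕ → V) (n : ℕ) : Prop
    extends G.IsWalkIn A x y p n where
  injective : ∀ k l, k < l → l ≤ n → p k ≠ p l
  chordless : ∀ k l, k + 2 ≤ l → l ≤ n → ¬ G.Adj (p k) (p l)

section Walks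

variable {A : Finset V} {x y : V} {p : ℕ → V} {n : ℕ}

lemma isWalkIn_nil (x : V) : G.IsWalkIn A x x (fun _ => x) 0 :=
  ⟨rfl, rfl, fun _ h h' => absurd h' (by omega), fun _ h => absurd h (by omega)⟩

lemma IsWalkIn.snoc (hp : G.IsWalkIn A x y p n) (hy : 0 < n → y ∈ A) {z : V} (hyz : G.Adj y z) :
    G.IsWalkIn A x z (fun k => if k ≤ n then p k else z) (n + 1) where
  start := by simp [hp.start]
  finish := by simp
  mem k hk hkn := by
    rcases Nat.lt_or_ge k n with h | h
    · simpa [h.le] using hp.mem k hk h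
    · simpa [show k = n by omega, hp.finish] using hy (by omega)
  adj k hk := by
    rcases Nat.lt_or_ge k n with h | h
    · simpa [h.le, Nat.succ_le_of_lt h] using hp.adj k h
    · simpa [show k = n by omega, hp.finish] using hyz

lemma ReachIn.exists_isWalkIn {u v : V} (h : G.ReachIn A u v) (hxu : G.Adj x u) :
    ∃ n p, G.IsWalkIn A x v p (n + 1) := by
  induction h with
  | refl => exact ⟨0, _, (isWalkIn_nil x).snoc (by omega) hxu⟩
  | tail _ st ih =>
    obtain ⟨n, p, hp⟩ := ih
    exact ⟨n + 1, _, hp.snoc (fun _ => st.1) st.2.2⟩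

/-- Cutting out the vertices `p (i + 1), …, p (i + δ)` of a walk, which is again a walk when
`p i` is adjacent to `p (i + δ + 1)`. -/
lemma IsWalkIn.shortcut (hp : G.IsWalkIn A x y p n) {i δ : ℕ} (hδ : 0 < δ) (hin : i + δ ≤ n)
    (hjoin : i + δ < n → G.Adj (p i) (p (i + δ + 1))) (hend : i + δ = n → p i = p n) :
    G.IsWalkIn A x y (fun k => if k ≤ i then p k else p (k + δ)) (n - δ) where
  start := by simp [hp.start]
  finish := by
    by_cases h : n - δ ≤ i
    · simp [show n - δ = i by omega, hend (by omega), hp.finish]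
    · simp [h, show n - δ + δ = n by omega, hp.finish]
  mem k hk hkn := by
    by_cases h : k ≤ i
    · simpa [h] using hp.mem k hk (by omega)
    · simpa [h] using hp.mem (k + δ) (by omega) (by omega)
  adj k hk := by
    by_cases h : k + 1 ≤ i
    · simpa [h, show k ≤ i by omega] using hp.adj k (by omega)
    by_cases h' : k ≤ i
    · simpa [h, h', show k = i by omega, show i + 1 + δ = i + δ + 1 by omega] using hjoin (by omega)
    · simpa [h, h', show k + 1 + δ = k + δ + 1 by omega] using hp.adj (k + δ) (by omega)

/-- A shortest walk is an induced path. -/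
lemma IsWalkIn.exists_isInducedPathIn (hp : G.IsWalkIn A x y p n) :
    ∃ m q, G.IsInducedPathIn A x y q m := by
  classical
  have hex : ∃ m q, G.IsWalkIn A x y q m := ⟨n, p, hp⟩
  obtain ⟨q, hq⟩ := Nat.find_spec hex
  have hmin : ∀ m r, G.IsWalkIn A x y r m → Nat.find hex ≤ m :=
    fun m r hr => Nat.find_min' hex ⟨r, hr⟩
  refine ⟨Nat.find hex, q, hq, fun k l hkl hl heq => ?_, fun k l hkl hl hadj => ?_⟩
  · have := hmin _ _ (hq.shortcut (i := k) (δ := l - k) (by omega) (by omega)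
      (fun _ => by simpa [heq, show k + (l - k) = l by omega] using hq.adj l (by omega))
      (fun h => by rw [heq, ← h, show k + (l - k) = l by omega]))
    omega
  · have := hmin _ _ (hq.shortcut (i := k) (δ := l - k - 1) (by omega) (by omega)
      (fun _ => by rwa [show k + (l - k - 1) + 1 = l by omega]) (fun _ => by omega))
    omega

lemma IsInducedPathIn.two_le (hp : G.IsInducedPathIn A x y p n) (hxy : x ≠ y)
    (hadj : ¬ G.Adj x y) : 2 ≤ n := by
  by_contra! h
  interval_cases n
  · exact hxy (hp.start.symm.trans hp.finish)
  · exact hadj (hp.start ▸ hp.finish ▸ hp.adj 0 one_pos)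

end Walks

section ConcatReverse

variable {A B : Finset V} {x y : V} {q r : ℕ → V} {n₁ n₂ : ℕ}

/-- The closed walk running along `q` from `q 0` to `q n₁ = r n₂` and back along `r` to `r 0`. -/
def concatReverse (q r : ℕ → V) (n₁ n₂ k : ℕ) : V :=
  if k ≤ n₁ then q k else r (n₁ + n₂ - k)

lemma concatReverse_of_le {k : ℕ} (hk : k ≤ n₁) : concatReverse q r n₁ n₂ k = q k :=
  if_pos hk

lemma IsWalkIn.concatReverse_of_ge (hq : G.IsWalkIn A x y q n₁) (hr : G.IsWalkIn B x y r n₂)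
    {k : ℕ} (hk : n₁ ≤ k) : concatReverse q r n₁ n₂ k = r (n₁ + n₂ - k) := by
  rcases hk.lt_or_eq with hk | rfl
  · exact if_neg (by omega)
  · rw [concatReverse_of_le le_rfl, hq.finish, Nat.add_sub_cancel_left, hr.finish]

lemma IsWalkIn.concatReverse_mem_left (hq : G.IsWalkIn A x y q n₁) {k : ℕ} (hk : 0 < k)
    (hkn : k < n₁) : concatReverse q r n₁ n₂ k ∈ A :=
  concatReverse_of_le hkn.le ▸ hq.mem k hk hkn

lemma IsWalkIn.concatReverse_mem_right (hq : G.IsWalkIn A x y q n₁) (hr : G.IsWalkIn B x y r n₂)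
    {k : ℕ} (hk : n₁ < k) (hkn : k < n₁ + n₂) : concatReverse q r n₁ n₂ k ∈ B :=
  hq.concatReverse_of_ge hr hk.le ▸ hr.mem _ (by omega) (by omega)

lemma IsWalkIn.concatReverse_adj (hq : G.IsWalkIn A x y q n₁) (hr : G.IsWalkIn B x y r n₂)
    {k : ℕ} (hk : k < n₁ + n₂) :
    G.Adj (concatReverse q r n₁ n₂ k) (concatReverse q r n₁ n₂ (k + 1)) := by
  by_cases hk₁ : k < n₁
  · rw [concatReverse_of_le hk₁.le, concatReverse_of_le hk₁]
    exact hq.adj k hk₁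
  · rw [hq.concatReverse_of_ge hr (by omega), hq.concatReverse_of_ge hr (by omega),
      show n₁ + n₂ - k = n₁ + n₂ - (k + 1) + 1 by omega]
    exact (hr.adj _ (by omega)).symm

lemma IsWalkIn.concatReverse_closed (hq : G.IsWalkIn A x y q n₁) (hr : G.IsWalkIn B x y r n₂) :
    concatReverse q r n₁ n₂ (n₁ + n₂) = concatReverse q r n₁ n₂ 0 := by
  rw [hq.concatReverse_of_ge hr (by omega), Nat.sub_self, hr.start, concatReverse_of_le n₁.zero_le,
    hq.start]

lemma IsInducedPathIn.concatReverse_injective (hq : G.IsInducedPathIn A x y q n₁)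
    (hr : G.IsInducedPathIn B x y r n₂) (hAB : ∀ u ∈ A, ∀ v ∈ B, u ≠ v ∧ ¬ G.Adj u v)
    (hxB : x ∉ B) {k l : ℕ} (hkl : k < l) (hln : l < n₁ + n₂) :
    concatReverse q r n₁ n₂ k ≠ concatReverse q r n₁ n₂ l := by
  by_cases hl : l ≤ n₁
  · rw [concatReverse_of_le (by omega), concatReverse_of_le hl]
    exact hq.injective k l hkl hl
  by_cases hk : n₁ ≤ k
  · rw [hq.concatReverse_of_ge hr.1 hk, hq.concatReverse_of_ge hr.1 (by omega)]
    exact (hr.injective _ _ (by omega) (by omega)).symm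
  have hlB := hq.concatReverse_mem_right hr.1 (by omega) hln
  rcases Nat.eq_zero_or_pos k with rfl | hk0
  · rw [concatReverse_of_le n₁.zero_le, hq.start]
    exact fun h => hxB (h ▸ hlB)
  · exact (hAB _ (hq.concatReverse_mem_left hk0 (by omega)) _ hlB).1

end ConcatReverse

def IsSimplicialIn (G : SimpleGraph V) (W : Finset V) (v : V) : Prop :=
  v ∈ W ∧ G.IsClique {x | x ∈ W ∧ G.Adj v x}

lemma IsClique.isSimplicialIn {W : Finset V} (hW : G.IsClique (W : Set V)) {v : V} (hv : v ∈ W) :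
    G.IsSimplicialIn W v :=
  ⟨hv, hW.subset fun _ hx => hx.1⟩

lemma exists_isInducedPathIn_componentIn {A : Finset V} {a u u' x y : V}
    (hu : u ∈ G.componentIn A a) (hu' : u' ∈ G.componentIn A a) (hxu : G.Adj x u)
    (hu'y : G.Adj u' y) : ∃ n p, G.IsInducedPathIn (G.componentIn A a) x y p n := by
  obtain ⟨n, p, hp⟩ := (reachIn_componentIn hu hu').exists_isWalkIn hxu
  exact (hp.snoc (fun _ => hu') hu'y).exists_isInducedPathIn

section Separators

variable [DecidableEq V] {W S : Finset V} {a b : V}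

lemma not_reachIn_of_subset_pair {A : Finset V} (hA : A ⊆ {a, b}) (hab : a ≠ b)
    (hadj : ¬ G.Adj a b) : ¬ G.ReachIn A a b := by
  intro h
  obtain h | ⟨c, ⟨-, hc, hac⟩, -⟩ := Relation.ReflTransGen.cases_head h
  · exact hab h
  · rcases mem_insert.1 (hA hc) with rfl | hc
    · exact G.loopless.irrefl _ hac
    · exact hadj (mem_singleton.1 hc ▸ hac)

lemma exists_minimal_separator (hab : a ≠ b) (hadj : ¬ G.Adj a b) :
    ∃ S ⊆ W \ {a, b}, ¬ G.ReachIn (W \ S) a b ∧ ∀ s ∈ S, G.ReachIn (W \ S.erase s) a b := by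
  classical
  set F := (W \ {a, b}).powerset.filter fun S => ¬ G.ReachIn (W \ S) a b
  have hF : W \ {a, b} ∈ F := mem_filter.2 ⟨mem_powerset_self _,
    not_reachIn_of_subset_pair (fun x hx => by simp at hx ⊢; tauto) hab hadj⟩
  obtain ⟨S, hSF, hSmin⟩ := exists_min_image F card ⟨_, hF⟩
  obtain ⟨hS, hsep⟩ := mem_filter.1 hSF
  refine ⟨S, mem_powerset.1 hS, hsep, fun s hs => ?_⟩
  by_contra h
  have := hSmin (S.erase s) (mem_filter.2 ⟨mem_powerset.2
    ((erase_subset _ _).trans (mem_powerset.1 hS)), h⟩)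
  exact (card_erase_lt_of_mem hs).not_ge this

lemma exists_adj_of_minimal_separator (ha : a ∈ W \ S) (hsep : ¬ G.ReachIn (W \ S) a b)
    {s : V} (hs : G.ReachIn (W \ S.erase s) a b) : ∃ u ∈ G.componentIn (W \ S) a, G.Adj u s :=
  exists_adj_of_reachIn_insert ha hsep <| hs.mono fun x hx => by
    by_cases hxs : x = s <;> simp_all

/-- The neighbours in `W` of a vertex of the component of `c` in `W \ S` lie in that component or
in `S`. -/
lemma exists_isSimplicialIn_mem_componentIn {c : V}
    (hS : G.IsClique (S : Set V)) (hc : c ∈ W \ S)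
    (hAS : G.IsClique (↑(G.componentIn (W \ S) c ∪ S) : Set V) ∨
      ∃ α β, G.IsSimplicialIn (G.componentIn (W \ S) c ∪ S) α ∧
        G.IsSimplicialIn (G.componentIn (W \ S) c ∪ S) β ∧ α ≠ β ∧ ¬ G.Adj α β) :
    ∃ α ∈ G.componentIn (W \ S) c, G.IsSimplicialIn W α := by
  set A := G.componentIn (W \ S) c
  have hlift : ∀ v ∈ A, G.IsSimplicialIn (A ∪ S) v → G.IsSimplicialIn W v := by
    refine fun v hv hvs => ⟨(mem_sdiff.1 (componentIn_subset hv)).1, hvs.2.subset ?_⟩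
    rintro x ⟨hx, hvx⟩
    refine ⟨?_, hvx⟩
    by_cases hxS : x ∈ S
    · exact mem_union_right _ hxS
    · exact mem_union_left _ (mem_componentIn_of_adj hv (mem_sdiff.2 ⟨hx, hxS⟩) hvx)
  have hcA : c ∈ A := mem_componentIn_self hc
  obtain hclique | ⟨α, β, hα, hβ, hαβ, hadj⟩ := hAS
  · exact ⟨c, hcA, hlift c hcA (hclique.isSimplicialIn (mem_union_left _ hcA))⟩
  by_cases hαS : α ∈ S
  · have hβS : β ∉ S := fun hβS => hadj (hS hαS hβS hαβ)
    have hβA : β ∈ A := (mem_union.1 hβ.1).resolve_right hβS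
    exact ⟨β, hβA, hlift β hβA hβ⟩
  · have hαA : α ∈ A := (mem_union.1 hα.1).resolve_right hαS
    exact ⟨α, hαA, hlift α hαA hα⟩

end Separators

structure IsPerfectEliminationOrder (G : SimpleGraph V) (e : V → ℕ) : Prop where
  injective : Function.Injective e
  isClique_earlier : ∀ v, G.IsClique {u | G.Adj v u ∧ e u < e v}

end SimpleGraph

namespace IsChordal

open SimpleGraph

variable {V : Type*} {G : SimpleGraph V}

lemma exists_chord (hG : IsChordal G) {n : ℕ} (hn : 4 ≤ n) {g : ℕ → V}
    (hinj : ∀ k l, k < l → l < n → g k ≠ g l) (hadj : ∀ k < n, G.Adj (g k) (g (k + 1)))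
    (hcyc : g n = g 0) :
    ∃ k l, k + 2 ≤ l ∧ l < n ∧ (k = 0 → l ≠ n - 1) ∧ G.Adj (g k) (g l) := by
  have : NeZero n := ⟨by omega⟩
  have : Fact (1 < n) := ⟨by omega⟩
  have hsucc : ∀ z : ZMod n, (z + 1).val = (z.val + 1) % n := fun z => by
    rw [ZMod.val_add, ZMod.val_one]
  have hf_inj : Function.Injective fun z : ZMod n => g z.val := by
    intro z w h
    by_contra hne
    rcases lt_or_gt_of_ne ((ZMod.val_injective n).ne hne) with h' | h'
    · exact hinj _ _ h' (ZMod.val_lt w) h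
    · exact hinj _ _ h' (ZMod.val_lt z) h.symm
  have hf_adj : ∀ z : ZMod n, G.Adj (g z.val) (g (z + 1).val) := by
    intro z
    rw [hsucc]
    rcases (show z.val + 1 ≤ n from ZMod.val_lt z).lt_or_eq with h | h
    · rw [Nat.mod_eq_of_lt h]
      exact hadj _ (ZMod.val_lt z)
    · rw [h, Nat.mod_self, ← hcyc]
      simpa [h] using hadj _ (ZMod.val_lt z)
  obtain ⟨z, w, hzw, hz, hw, hzw_adj⟩ := hG n hn _ hf_inj hf_adj
  wlog hlt : z.val < w.val generalizing z w
  · exact this w z hzw.symm hw hz hzw_adj.symm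
      (lt_of_le_of_ne (not_lt.1 hlt) fun h => hzw (ZMod.val_injective n h.symm))
  refine ⟨z.val, w.val, ?_, ZMod.val_lt w, fun hz0 hwn => ?_, hzw_adj⟩
  · by_contra! h
    refine hz (ZMod.val_injective n ?_)
    rw [hsucc, Nat.mod_eq_of_lt (by have := ZMod.val_lt w; omega)]
    omega
  · refine hw (ZMod.val_injective n ?_)
    rw [hsucc, hwn, Nat.sub_add_cancel (by omega), Nat.mod_self, hz0]

/-- Otherwise the two paths close up to a chordless cycle of length at least `4`. -/
lemma adj_of_isInducedPathIn (hG : IsChordal G) {A B : Finset V} {x y : V} {q r : ℕ → V}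
    {n₁ n₂ : ℕ} (hq : G.IsInducedPathIn A x y q n₁) (hr : G.IsInducedPathIn B x y r n₂)
    (hAB : ∀ u ∈ A, ∀ v ∈ B, u ≠ v ∧ ¬ G.Adj u v) (hxB : x ∉ B) (hxy : x ≠ y) :
    G.Adj x y := by
  by_contra hxy_adj
  have h₁ := hq.two_le hxy hxy_adj
  have h₂ := hr.two_le hxy hxy_adj
  obtain ⟨k, l, hkl, hln, hk0, hchord⟩ := hG.exists_chord (g := concatReverse q r n₁ n₂)
    (by omega) (fun _ _ => hq.concatReverse_injective hr hAB hxB)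
    (fun _ => hq.concatReverse_adj hr.1) (hq.concatReverse_closed hr.1)
  by_cases hl : l ≤ n₁
  · rw [concatReverse_of_le (by omega), concatReverse_of_le hl] at hchord
    exact hq.chordless k l hkl hl hchord
  by_cases hk : n₁ ≤ k
  · rw [hq.concatReverse_of_ge hr.1 hk, hq.concatReverse_of_ge hr.1 (by omega)] at hchord
    exact hr.chordless _ _ (by omega) (by omega) hchord.symm
  rcases Nat.eq_zero_or_pos k with rfl | hkpos
  · rw [concatReverse_of_le n₁.zero_le, hq.start, ← hr.start,
      hq.concatReverse_of_ge hr.1 (by omega)] at hchord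
    exact hr.chordless 0 _ (by have := hk0 rfl; omega) (by omega) hchord
  · exact (hAB _ (hq.concatReverse_mem_left hkpos (by omega)) _
      (hq.concatReverse_mem_right hr.1 (by omega) hln)).2 hchord

section

variable [DecidableEq V]

lemma isClique_of_minimal_separator (hG : IsChordal G) {W S : Finset V} {a b : V}
    (ha : a ∈ W \ S) (hb : b ∈ W \ S) (hsep : ¬ G.ReachIn (W \ S) a b)
    (hmin : ∀ s ∈ S, G.ReachIn (W \ S.erase s) a b) : G.IsClique (S : Set V) := by
  intro x hx y hy hxy
  obtain ⟨ux, hux, hxux⟩ := exists_adj_of_minimal_separator ha hsep (hmin x hx)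
  obtain ⟨uy, huy, hyuy⟩ := exists_adj_of_minimal_separator ha hsep (hmin y hy)
  have hsep' : ¬ G.ReachIn (W \ S) b a := fun h => hsep h.symm
  obtain ⟨vx, hvx, hxvx⟩ := exists_adj_of_minimal_separator hb hsep' (hmin x hx).symm
  obtain ⟨vy, hvy, hyvy⟩ := exists_adj_of_minimal_separator hb hsep' (hmin y hy).symm
  obtain ⟨n₁, q, hq⟩ := exists_isInducedPathIn_componentIn hux huy hxux.symm hyuy
  obtain ⟨n₂, r, hr⟩ := exists_isInducedPathIn_componentIn hvx hvy hxvx.symm hyvy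
  have hxB : x ∉ G.componentIn (W \ S) b := fun h =>
    (mem_sdiff.1 (componentIn_subset h)).2 hx
  exact hG.adj_of_isInducedPathIn hq hr
    (fun _ hu _ hv => ne_and_not_adj_of_mem_componentIn hsep hu hv) hxB hxy

/-- Dirac's lemma. The two simplicial vertices are found, by induction, in the components of `a`
and of `b` for a minimal `a`-`b` separator. -/
theorem isClique_or_exists_isSimplicialIn_pair (hG : IsChordal G) (W : Finset V) :
    G.IsClique (W : Set V) ∨
      ∃ α β, G.IsSimplicialIn W α ∧ G.IsSimplicialIn W β ∧ α ≠ β ∧ ¬ G.Adj α β := by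
  induction W using Finset.strongInduction with
  | H W ih =>
  by_cases hW : G.IsClique (W : Set V)
  · exact .inl hW
  right
  obtain ⟨a, ha, b, hb, hab, hadj⟩ : ∃ a ∈ W, ∃ b ∈ W, a ≠ b ∧ ¬ G.Adj a b := by
    simpa [IsClique, Set.Pairwise] using hW
  obtain ⟨S, hS, hsep, hmin⟩ := exists_minimal_separator (W := W) hab hadj
  have hSW : S ⊆ W := hS.trans sdiff_subset
  have haS : a ∈ W \ S := mem_sdiff.2 ⟨ha, fun h => by simpa using hS h⟩
  have hbS : b ∈ W \ S := mem_sdiff.2 ⟨hb, fun h => by simpa using hS h⟩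
  have hSc := hG.isClique_of_minimal_separator haS hbS hsep hmin
  have hside : ∀ c d, c ∈ W \ S → d ∈ W \ S → ¬ G.ReachIn (W \ S) c d →
      ∃ α ∈ G.componentIn (W \ S) c, G.IsSimplicialIn W α := by
    intro c d hc hd hcd
    refine exists_isSimplicialIn_mem_componentIn hSc hc (ih _ ?_)
    refine Finset.ssubset_iff_subset_ne.2
      ⟨union_subset (componentIn_subset.trans sdiff_subset) hSW, fun h => ?_⟩
    have hd' := h ▸ (mem_sdiff.1 hd).1
    obtain hdc | hdS := mem_union.1 hd'
    · exact hcd (mem_componentIn.1 hdc).2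
    · exact (mem_sdiff.1 hd).2 hdS
  obtain ⟨α, hα, hαs⟩ := hside a b haS hbS hsep
  obtain ⟨β, hβ, hβs⟩ := hside b a hbS haS fun h => hsep h.symm
  obtain ⟨hne, hna⟩ := ne_and_not_adj_of_mem_componentIn hsep hα hβ
  exact ⟨α, β, hαs, hβs, hne, hna⟩

lemma exists_isSimplicialIn (hG : IsChordal G) {W : Finset V} (hW : W.Nonempty) :
    ∃ v, G.IsSimplicialIn W v := by
  obtain hclique | ⟨α, -, hα, -⟩ := hG.isClique_or_exists_isSimplicialIn_pair W
  · exact ⟨_, hclique.isSimplicialIn hW.choose_spec⟩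
  · exact ⟨α, hα⟩

/-- Repeatedly removing a simplicial vertex, and numbering it after the remaining ones. -/
lemma exists_injOn_isClique (hG : IsChordal G) (W : Finset V) :
    ∃ e : V → ℕ, Set.InjOn e W ∧ ∀ v ∈ W, G.IsClique {u | u ∈ W ∧ G.Adj v u ∧ e u < e v} := by
  induction W using Finset.strongInduction with
  | H W ih =>
  rcases W.eq_empty_or_nonempty with rfl | hW
  · exact ⟨fun _ => 0, by simp, by simp⟩
  obtain ⟨v, hvW, hv⟩ := hG.exists_isSimplicialIn hW
  obtain ⟨e', he'inj, he'⟩ := ih _ (erase_ssubset hvW)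
  set e := Function.update e' v ((W.erase v).sup e' + 1)
  have hlt : ∀ u ∈ W, u ≠ v → e u < e v := fun u hu huv => by
    simpa [e, huv] using Nat.lt_succ_of_le (le_sup (mem_erase.2 ⟨huv, hu⟩))
  refine ⟨e, fun u hu w hw huw => ?_, fun w hw => ?_⟩
  · by_cases hu' : u = v <;> by_cases hw' : w = v
    · rw [hu', hw']
    · exact absurd huw (hu' ▸ (hlt w hw hw').ne')
    · exact absurd huw (hw' ▸ (hlt u hu hu').ne)
    · refine he'inj (mem_erase.2 ⟨hu', hu⟩) (mem_erase.2 ⟨hw', hw⟩) ?_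
      simpa [e, hu', hw'] using huw
  · by_cases hwv : w = v
    · subst hwv
      exact hv.subset fun u hu => And.intro hu.1 hu.2.1
    refine (he' w (mem_erase.2 ⟨hwv, hw⟩)).subset ?_
    rintro u ⟨huW, hwu, hlt'⟩
    have huv : u ≠ v := fun h => (hlt w hw hwv).not_gt (h ▸ hlt')
    exact ⟨mem_erase.2 ⟨huv, huW⟩, hwu, by simpa [e, huv, hwv] using hlt'⟩

lemma exists_isPerfectEliminationOrder [Fintype V] (hG : IsChordal G) :
    ∃ e, G.IsPerfectEliminationOrder e := by
  obtain ⟨e, hinj, hclique⟩ := hG.exists_injOn_isClique univ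
  exact ⟨e, fun u w h => hinj (mem_univ u) (mem_univ w) h,
    fun v => by simpa using hclique v (mem_univ v)⟩

end

end IsChordal

lemma Finset.exists_card_filter_lt_eq {ι α : Type*} [DecidableEq ι] [LinearOrder α] {e : ι → α}
    {C : Finset ι} (he : Set.InjOn e C) {r : ℕ} (hr : r < #C) :
    ∃ v ∈ C, #{u ∈ C | e u < e v} = r := by
  induction C using Finset.induction_on_max_value e generalizing r with
  | empty => simp at hr
  | insert a s has hmax ih =>
    have hlt : ∀ x ∈ s, e x < e a := fun x hx => (hmax x hx).lt_of_ne fun h =>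
      has (he (mem_insert_of_mem hx) (mem_insert_self a s) h ▸ hx)
    rw [card_insert_of_notMem has] at hr
    rcases (Nat.lt_succ_iff.1 hr).lt_or_eq with hr | rfl
    · obtain ⟨v, hv, hcard⟩ := ih (he.mono (subset_insert a s)) hr
      refine ⟨v, mem_insert_of_mem hv, ?_⟩
      rwa [filter_insert, if_neg (hlt v hv).not_gt]
    · refine ⟨a, mem_insert_self a s, ?_⟩
      rw [filter_insert, if_neg (lt_irrefl _), filter_true_of_mem hlt]

lemma sum_Icc_choose_mul_pow {R : Type*} [CommRing R] {m d : ℕ} (h : m + 1 ≤ d) (x : R) :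
    ∑ k ∈ Icc 1 d, (m.choose (k - 1) : R) * x ^ (k - 1) = (x + 1) ^ m := by
  rw [← Ico_add_one_right_eq_Icc, sum_Ico_eq_sum_range, add_pow, Nat.add_sub_cancel]
  simp only [Nat.add_sub_cancel_left, one_pow, mul_one]
  rw [← sum_subset (range_subset_range.2 h) fun k _ hk => by
    rw [Nat.choose_eq_zero_of_lt (by simpa using hk), Nat.cast_zero, zero_mul]]
  exact sum_congr rfl fun _ _ => mul_comm _ _

lemma eq_of_forall_sum_Icc_mul_pow_eq {d : ℕ} {a a' : ℕ → ℤ}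
    (h : ∀ y : ℤ, ∑ k ∈ Icc 1 d, a k * y ^ (k - 1) = ∑ k ∈ Icc 1 d, a' k * y ^ (k - 1))
    {k : ℕ} (hk : k ∈ Icc 1 d) : a k = a' k := by
  open Polynomial in
  let P : (ℕ → ℤ) → ℤ[X] := fun c => ∑ k ∈ Icc 1 d, C (c k) * X ^ (k - 1)
  have hP : P a = P a' := Polynomial.funext fun y => by simpa [P, eval_finsetSum] using h y
  have hcoeff : ∀ c, (P c).coeff (k - 1) = c k := fun c => by
    simp only [P, finsetSum_coeff, coeff_C_mul_X_pow]
    rw [sum_eq_single k (fun l hl hlk => if_neg (by simp at hk hl; omega)) (absurd hk), if_pos rfl]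
  rw [← hcoeff a, hP, hcoeff]

section MaxCliques

variable {V : Type*} [Fintype V] {G : SimpleGraph V}

lemma exists_isMaxCliqueOf_superset {s : Finset V} (hs : G.IsClique (s : Set V)) :
    ∃ C, IsMaxCliqueOf G C ∧ s ⊆ C := by
  classical
  obtain ⟨C, hC, hmax⟩ := exists_max_image {t : Finset V | G.IsClique (t : Set V) ∧ s ⊆ t} card
    ⟨s, by simpa using hs⟩
  obtain ⟨hCc, hsC⟩ := (mem_filter.1 hC).2
  exact ⟨C, ⟨hCc, fun t ht hCt => eq_of_subset_of_card_le hCt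
    (hmax t (mem_filter.2 ⟨mem_univ t, ht, hsC.trans hCt⟩))⟩, hsC⟩

variable [DecidableEq V] {C D : Finset V}

lemma card_inter_le_kappaTilde (hC : IsMaxCliqueOf G C) (hD : IsMaxCliqueOf G D) (hCD : C ≠ D) :
    #(C ∩ D) ≤ kappaTilde G :=
  le_csSup ⟨Fintype.card V, by rintro _ ⟨_, _, -, -, -, rfl⟩; exact card_le_univ _⟩
    ⟨C, D, hC, hD, hCD, rfl⟩

lemma eq_of_kappaTilde_lt_card (hC : IsMaxCliqueOf G C) (hD : IsMaxCliqueOf G D) {s : Finset V}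
    (hsC : s ⊆ C) (hsD : s ⊆ D) (hs : kappaTilde G < #s) : C = D := by
  by_contra hCD
  exact ((card_le_card (subset_inter hsC hsD)).trans (card_inter_le_kappaTilde hC hD hCD)).not_gt hs

end MaxCliques

namespace SimpleGraph

variable {V : Type*} [Fintype V] {G : SimpleGraph V} {e : V → ℕ}

open scoped Classical in
noncomputable def earlierNeighbors (G : SimpleGraph V) (e : V → ℕ) (v : V) : Finset V :=
  {u | G.Adj v u ∧ e u < e v}

@[simp]
lemma mem_earlierNeighbors {u v : V} : u ∈ G.earlierNeighbors e v ↔ G.Adj v u ∧ e u < e v := by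
  classical
  simp [earlierNeighbors]

lemma notMem_earlierNeighbors_self (v : V) : v ∉ G.earlierNeighbors e v :=
  fun h => lt_irrefl _ (mem_earlierNeighbors.1 h).2

lemma IsClique.filter_lt_subset_earlierNeighbors {C : Finset V} (hC : G.IsClique (C : Set V))
    {v : V} (hv : v ∈ C) : {u ∈ C | e u < e v} ⊆ G.earlierNeighbors e v := by
  intro u hu
  obtain ⟨huC, hlt⟩ := mem_filter.1 hu
  exact mem_earlierNeighbors.2 ⟨hC hv huC (fun h => hlt.ne (h ▸ rfl)), hlt⟩

/-- The entry `b_k` of the b-vector, read off a perfect elimination order `e`: the number of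
vertices that, together with their earlier neighbours, form a `k`-clique. -/
noncomputable def eliminationCount (G : SimpleGraph V) (e : V → ℕ) (k : ℕ) : ℕ :=
  #{v | #(G.earlierNeighbors e v) + 1 = k}

variable [DecidableEq V] (he : G.IsPerfectEliminationOrder e)
include he

lemma IsPerfectEliminationOrder.isNClique_insert (v : V) :
    G.IsNClique (#(G.earlierNeighbors e v) + 1) (insert v (G.earlierNeighbors e v)) := by
  refine ⟨?_, card_insert_of_notMem (notMem_earlierNeighbors_self v)⟩
  rw [coe_insert]
  refine (he.isClique_earlier v |>.subset fun u hu => mem_earlierNeighbors.1 hu).insert ?_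
  exact fun u hu _ => (mem_earlierNeighbors.1 hu).1

/-- Every `(t + 1)`-clique is `insert v T` for its `e`-last vertex `v` and a `t`-subset `T` of
the earlier neighbours of `v`. -/
lemma IsPerfectEliminationOrder.setOf_isNClique_succ_eq_biUnion (t : ℕ) :
    {s : Finset V | G.IsNClique (t + 1) s} =
      ↑(univ.biUnion fun v => ((G.earlierNeighbors e v).powersetCard t).image (insert v)) := by
  ext s
  simp only [Set.mem_ofPred_eq, mem_coe, mem_biUnion, mem_univ, true_and, mem_image,
    mem_powersetCard]
  constructor
  · intro hs
    obtain ⟨v, hvs, hmax⟩ := exists_max_image s e (card_pos.1 (by rw [hs.card_eq]; omega))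
    refine ⟨v, s.erase v, ⟨fun u hu => ?_, ?_⟩, insert_erase hvs⟩
    · obtain ⟨huv, hus⟩ := mem_erase.1 hu
      exact mem_earlierNeighbors.2 ⟨hs.isClique hvs hus (Ne.symm huv),
        (hmax u hus).lt_of_ne fun h => huv (he.injective h)⟩
    · rw [card_erase_of_mem hvs, hs.card_eq, Nat.add_sub_cancel]
  · rintro ⟨v, T, ⟨hT, rfl⟩, rfl⟩
    have hT' : insert v T ⊆ insert v (G.earlierNeighbors e v) := insert_subset_insert v hT
    refine ⟨(he.isNClique_insert v).isClique.subset (by exact_mod_cast hT'), ?_⟩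
    exact card_insert_of_notMem fun h => notMem_earlierNeighbors_self v (hT h)

lemma IsPerfectEliminationOrder.cliqueCount_succ (t : ℕ) :
    cliqueCount G (t + 1) = ∑ v, (#(G.earlierNeighbors e v)).choose t := by
  rw [cliqueCount, he.setOf_isNClique_succ_eq_biUnion, Set.ncard_coe_finset, card_biUnion]
  · refine sum_congr rfl fun v _ => ?_
    rw [card_image_of_injOn, card_powersetCard]
    intro T hT T' hT' h
    have hv : ∀ {T}, T ∈ (G.earlierNeighbors e v).powersetCard t → v ∉ T := fun hT hv =>
      notMem_earlierNeighbors_self v ((mem_powersetCard.1 hT).1 hv)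
    rw [← erase_insert (hv hT), show insert v T = insert v T' from h, erase_insert (hv hT')]
  · intro v _ w _ hvw
    refine Finset.disjoint_left.2 fun s hsv hsw => ?_
    obtain ⟨T, hT, rfl⟩ := mem_image.1 hsv
    obtain ⟨T', hT', h⟩ := mem_image.1 hsw
    have hwT : w ∈ T := (mem_insert.1 (h ▸ mem_insert_self w T')).resolve_left (Ne.symm hvw)
    have hvT' : v ∈ T' := (mem_insert.1 (h.symm ▸ mem_insert_self v T)).resolve_left hvw
    have h₁ := (mem_earlierNeighbors.1 ((mem_powersetCard.1 hT).1 hwT)).2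
    have h₂ := (mem_earlierNeighbors.1 ((mem_powersetCard.1 hT').1 hvT')).2
    omega

lemma IsPerfectEliminationOrder.sum_Icc_cliqueCount_mul_pow {R : Type*} [CommRing R] {d : ℕ}
    (hd : ∀ v, #(G.earlierNeighbors e v) + 1 ≤ d) (x : R) :
    ∑ k ∈ Icc 1 d, (cliqueCount G k : R) * x ^ (k - 1) =
      ∑ k ∈ Icc 1 d, (G.eliminationCount e k : R) * (x + 1) ^ (k - 1) := by
  calc ∑ k ∈ Icc 1 d, (cliqueCount G k : R) * x ^ (k - 1)
      = ∑ k ∈ Icc 1 d, ∑ v, ((#(G.earlierNeighbors e v)).choose (k - 1) : R) * x ^ (k - 1) := by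
        refine sum_congr rfl fun k hk => ?_
        obtain ⟨t, rfl⟩ : ∃ t, k = t + 1 := ⟨k - 1, by simp at hk; omega⟩
        rw [he.cliqueCount_succ, Nat.cast_sum, sum_mul, Nat.add_sub_cancel]
    _ = ∑ v, (x + 1) ^ #(G.earlierNeighbors e v) := by
        rw [sum_comm]
        exact sum_congr rfl fun v _ => sum_Icc_choose_mul_pow (hd v) x
    _ = ∑ k ∈ Icc 1 d, (G.eliminationCount e k : R) * (x + 1) ^ (k - 1) := by
        rw [← sum_fiberwise_of_maps_to (g := fun v => #(G.earlierNeighbors e v) + 1)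
          fun v _ => mem_Icc.2 ⟨Nat.le_add_left 1 _, hd v⟩]
        refine sum_congr rfl fun k _ => ?_
        rw [eliminationCount, ← nsmul_eq_mul, ← sum_const]
        exact sum_congr rfl fun v hv => by rw [← (mem_filter.1 hv).2, Nat.add_sub_cancel]

/-- Take `v ∈ C` with exactly `j - 1` predecessors in `C`: a maximal clique containing `v` and its
earlier neighbours meets `C` in at least `j > κ̃(G)` vertices, so it is `C`. -/
lemma IsPerfectEliminationOrder.exists_card_earlierNeighbors_eq {C : Finset V}
    (hC : IsMaxCliqueOf G C) {j : ℕ} (hj : kappaTilde G < j) (hjC : j ≤ #C) :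
    ∃ v, #(G.earlierNeighbors e v) + 1 = j ∧ insert v (G.earlierNeighbors e v) ⊆ C := by
  obtain ⟨v, hvC, hrank⟩ :=
    exists_card_filter_lt_eq (C := C) he.injective.injOn (r := j - 1) (by omega)
  have hFS : {u ∈ C | e u < e v} ⊆ G.earlierNeighbors e v :=
    hC.1.filter_lt_subset_earlierNeighbors hvC
  obtain ⟨C', hC', hQC'⟩ := exists_isMaxCliqueOf_superset (he.isNClique_insert v).isClique
  have hvF : v ∉ {u ∈ C | e u < e v} := by simp
  obtain rfl : C = C' := eq_of_kappaTilde_lt_card hC hC'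
    (insert_subset hvC (filter_subset _ _)) ((insert_subset_insert v hFS).trans hQC')
    (by rw [card_insert_of_notMem hvF]; omega)
  have hSF : G.earlierNeighbors e v ⊆ {u ∈ C | e u < e v} := fun u hu =>
    mem_filter.2 ⟨hQC' (mem_insert_of_mem hu), (mem_earlierNeighbors.1 hu).2⟩
  exact ⟨v, by rw [subset_antisymm hSF hFS]; omega, hQC'⟩

open scoped Classical in
lemma IsPerfectEliminationOrder.eliminationCount_le_card_maxCliques (i : ℕ) :
    G.eliminationCount e i ≤ #{C | IsMaxCliqueOf G C ∧ i ≤ #C} := by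
  refine card_le_card_of_forall_subsingleton (fun v C => insert v (G.earlierNeighbors e v) ⊆ C)
    (fun v hv => ?_) (fun C hC => ?_)
  · obtain ⟨C, hC, hQC⟩ := exists_isMaxCliqueOf_superset (he.isNClique_insert v).isClique
    refine ⟨C, mem_filter.2 ⟨mem_univ _, hC, ?_⟩, hQC⟩
    rw [← (mem_filter.1 hv).2, ← (he.isNClique_insert v).card_eq]
    exact card_le_card hQC
  · rintro v ⟨hv, hvC⟩ w ⟨hw, hwC⟩
    by_contra hvw
    wlog hlt : e v < e w generalizing v w
    · exact this hw hwC hv hvC (Ne.symm hvw)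
        ((not_lt.1 hlt).lt_of_ne fun h => hvw (he.injective h).symm)
    have hsub : insert v (G.earlierNeighbors e v) ⊆ G.earlierNeighbors e w := by
      refine .trans ?_ ((mem_filter.1 hC).2.1.1.filter_lt_subset_earlierNeighbors
        (hwC (mem_insert_self w _)))
      intro u hu
      refine mem_filter.2 ⟨hvC hu, ?_⟩
      rcases mem_insert.1 hu with rfl | hu
      · exact hlt
      · exact (mem_earlierNeighbors.1 hu).2.trans hlt
    have := card_le_card hsub
    rw [(he.isNClique_insert v).card_eq] at this
    have hv' := (mem_filter.1 hv).2
    have hw' := (mem_filter.1 hw).2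
    omega

open scoped Classical in
lemma IsPerfectEliminationOrder.card_maxCliques_le_eliminationCount {j : ℕ}
    (hj : kappaTilde G < j) : #{C | IsMaxCliqueOf G C ∧ j ≤ #C} ≤ G.eliminationCount e j := by
  refine card_le_card_of_forall_subsingleton (fun C v => insert v (G.earlierNeighbors e v) ⊆ C)
    (fun C hC => ?_) (fun v hv => ?_)
  · obtain ⟨hCmax, hjC⟩ := (mem_filter.1 hC).2
    obtain ⟨v, hv, hQ⟩ := he.exists_card_earlierNeighbors_eq hCmax hj hjC
    exact ⟨v, mem_filter.2 ⟨mem_univ _, hv⟩, hQ⟩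
  · rintro C ⟨hC, hQC⟩ D ⟨hD, hQD⟩
    refine eq_of_kappaTilde_lt_card (mem_filter.1 hC).2.1 (mem_filter.1 hD).2.1 hQC hQD ?_
    rwa [(he.isNClique_insert v).card_eq, (mem_filter.1 hv).2]

lemma IsPerfectEliminationOrder.eliminationCount_le_of_kappaTilde_lt {i j : ℕ}
    (hj : kappaTilde G < j) (hji : j ≤ i) : G.eliminationCount e i ≤ G.eliminationCount e j := by
  classical
  calc G.eliminationCount e i ≤ #{C | IsMaxCliqueOf G C ∧ i ≤ #C} :=
        he.eliminationCount_le_card_maxCliques i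
    _ ≤ #{C | IsMaxCliqueOf G C ∧ j ≤ #C} :=
        card_le_card fun C hC => by
          simp only [mem_filter] at hC ⊢
          exact ⟨hC.1, hC.2.1, hji.trans hC.2.2⟩
    _ ≤ G.eliminationCount e j := he.card_maxCliques_le_eliminationCount hj

end SimpleGraph

theorem stmt4_general {V : Type} [Fintype V] [DecidableEq V] (G : SimpleGraph V)
    (hch : IsChordal G)
    (d : ℕ)
    (hdmax : ∀ (m : ℕ) (s : Finset V), G.IsNClique m s → m ≤ d)
    (b : ℕ → ℤ)
    (hb : ∀ x : ℤ, ∑ i ∈ Finset.Icc 1 d, b i * (x + 1) ^ (i - 1) =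
      ∑ i ∈ Finset.Icc 1 d, (cliqueCount G i : ℤ) * x ^ (i - 1))
    (i j : ℕ) (hj : kappaTilde G < j) (hji : j ≤ i) (hi : i ≤ d) :
    b i ≤ b j := by
  obtain ⟨e, he⟩ := hch.exists_isPerfectEliminationOrder
  have hb_eq : ∀ k ∈ Icc 1 d, b k = G.eliminationCount e k := by
    refine fun k hk => eq_of_forall_sum_Icc_mul_pow_eq (a' := fun k => (G.eliminationCount e k : ℤ))
      (fun y => ?_) hk
    have := hb (y - 1)
    rwa [sub_add_cancel, he.sum_Icc_cliqueCount_mul_pow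
      (fun v => hdmax _ _ (he.isNClique_insert v)), sub_add_cancel] at this
  rw [hb_eq i (mem_Icc.2 ⟨by omega, hi⟩), hb_eq j (mem_Icc.2 ⟨by omega, hji.trans hi⟩)]
  exact_mod_cast he.eliminationCount_le_of_kappaTilde_lt hj hji

/-- For a non-complete chordal graph `G` with largest clique size `d` and `b`-vector `b`,
one has `b i ≤ b j` for all indices `i, j` with `κ̃(G) < j ≤ i ≤ d`. -/
theorem stmt4 {V : Type} [Fintype V] [DecidableEq V] (G : SimpleGraph V)
    (hnc : G ≠ ⊤) (hch : IsChordal G)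
    (d : ℕ) (hd : ∃ s : Finset V, G.IsNClique d s)
    (hdmax : ∀ (m : ℕ) (s : Finset V), G.IsNClique m s → m ≤ d)
    (b : ℕ → ℤ)
    (hb : ∀ x : ℤ, ∑ i ∈ Finset.Icc 1 d, b i * (x + 1) ^ (i - 1) =
      ∑ i ∈ Finset.Icc 1 d, (cliqueCount G i : ℤ) * x ^ (i - 1))
    (i j : ℕ) (hj : kappaTilde G < j) (hji : j ≤ i) (hi : i ≤ d) :
    b i ≤ b j :=
  stmt4_general G hch d hdmax b hb i j hj hji hi
end

section
/- Let T be a threshold graph that is not complete, with vertex connectivity κ. Then b_1 = b_2 = … = b_κ = 1. -/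
open Finset

open Polynomial

section CliquePolyAux

open scoped Classical in
noncomputable def cliqueSetOn {V : Type*} [DecidableEq V] (G : SimpleGraph V) (s : Finset V) :
    Finset (Finset V) :=
  s.powerset.filter (fun t => G.IsClique (↑t : Set V))

lemma mem_cliqueSetOn {V : Type*} [DecidableEq V] {G : SimpleGraph V} {s t : Finset V} :
    t ∈ cliqueSetOn G s ↔ t ⊆ s ∧ G.IsClique (↑t : Set V) := by
  classical
  simp [cliqueSetOn]

noncomputable def cliquePolyOn {V : Type*} [DecidableEq V] (G : SimpleGraph V) (s : Finset V) :
    Polynomial ℤ :=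
  ∑ t ∈ cliqueSetOn G s, X ^ t.card

variable {V : Type*} [DecidableEq V] {G : SimpleGraph V} {s : Finset V} {v : V}

lemma cliquePoly_single (G : SimpleGraph V) (v : V) :
    cliquePolyOn G {v} = 1 + X := by
  classical
  have h : cliqueSetOn G {v} = {∅, {v}} := by
    ext t
    simp only [mem_cliqueSetOn, Finset.mem_insert, Finset.mem_singleton,
      Finset.subset_singleton_iff]
    constructor
    · rintro ⟨h1, h2⟩; exact h1
    · rintro (rfl | rfl)
      · exact ⟨Or.inl rfl, by simp [SimpleGraph.IsClique]⟩
      · exact ⟨Or.inr rfl, by simp [SimpleGraph.IsClique]⟩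
  rw [cliquePolyOn, h]
  rw [Finset.sum_insert (fun h => (Finset.singleton_ne_empty v) (Finset.mem_singleton.mp h).symm),
    Finset.sum_singleton]
  simp

lemma cliquePoly_isolated (hv : v ∉ s) (hiso : ∀ u ∈ s, ¬ G.Adj v u) :
    cliquePolyOn G (insert v s) = cliquePolyOn G s + X := by
  have hset : cliqueSetOn G (insert v s) = insert {v} (cliqueSetOn G s) := by
    ext t
    simp only [mem_cliqueSetOn, Finset.mem_insert]
    constructor
    · rintro ⟨hts, hcl⟩
      by_cases hvt : v ∈ t
      · left
        apply Finset.Subset.antisymm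
        · intro u hu
          rw [Finset.mem_singleton]
          by_contra hne
          have hus : u ∈ s := by
            rcases Finset.mem_insert.mp (hts hu) with h | h
            · exact absurd h hne
            · exact h
          exact hiso u hus (hcl (by exact_mod_cast hvt) (by exact_mod_cast hu)
            (fun h => hne h.symm))
        · simpa using hvt
      · right
        refine ⟨fun u hu => ?_, hcl⟩
        rcases Finset.mem_insert.mp (hts hu) with h | h
        · exact absurd (h ▸ hu) hvt
        · exact h
    · rintro (rfl | ⟨h1, h2⟩)
      · exact ⟨by simp, by simp [SimpleGraph.IsClique]⟩
      · exact ⟨h1.trans (Finset.subset_insert _ _), h2⟩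
  have hnotmem : ({v} : Finset V) ∉ cliqueSetOn G s := by
    intro h
    exact hv ((mem_cliqueSetOn.mp h).1 (Finset.mem_singleton_self v))
  rw [cliquePolyOn, hset, Finset.sum_insert hnotmem, cliquePolyOn]
  simp [add_comm]

lemma cliquePoly_dominating (hv : v ∉ s) (hdom : ∀ u ∈ s, G.Adj v u) :
    cliquePolyOn G (insert v s) = (1 + X) * cliquePolyOn G s := by
  have hvnot : ∀ t ∈ cliqueSetOn G s, v ∉ t := fun t ht h =>
    hv ((mem_cliqueSetOn.mp ht).1 h)
  have hset : cliqueSetOn G (insert v s)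
      = cliqueSetOn G s ∪ (cliqueSetOn G s).image (insert v) := by
    ext t
    simp only [mem_cliqueSetOn, Finset.mem_union, Finset.mem_image]
    constructor
    · rintro ⟨hts, hcl⟩
      by_cases hvt : v ∈ t
      · right
        refine ⟨t.erase v, ⟨?_, ?_⟩, by simp [Finset.insert_erase hvt]⟩
        · intro u hu
          rcases Finset.mem_insert.mp (hts (Finset.erase_subset _ _ hu)) with h | h
          · exact absurd h (Finset.ne_of_mem_erase hu)
          · exact h
        · exact hcl.subset (by exact_mod_cast Finset.erase_subset v t)
      · left
        refine ⟨fun u hu => ?_, hcl⟩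
        rcases Finset.mem_insert.mp (hts hu) with h | h
        · exact absurd (h ▸ hu) hvt
        · exact h
    · rintro (⟨h1, h2⟩ | ⟨a, ⟨h1, h2⟩, rfl⟩)
      · exact ⟨h1.trans (Finset.subset_insert _ _), h2⟩
      · refine ⟨Finset.insert_subset_insert _ h1, ?_⟩
        rw [Finset.coe_insert]
        exact h2.insert (fun u hu _ => hdom u (h1 hu))
  have hdisj : Disjoint (cliqueSetOn G s) ((cliqueSetOn G s).image (insert v)) := by
    rw [Finset.disjoint_right]
    rintro t ht hmem
    rcases Finset.mem_image.mp ht with ⟨a, ha, rfl⟩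
    exact hvnot _ hmem (Finset.mem_insert_self v a)
  have hinj : ∀ a ∈ cliqueSetOn G s, ∀ b ∈ cliqueSetOn G s, insert v a = insert v b → a = b := by
    intro a ha b hb hab
    have hva := hvnot a ha
    have hvb := hvnot b hb
    have := congrArg (Finset.erase · v) hab
    simpa [Finset.erase_insert hva, Finset.erase_insert hvb] using this
  rw [cliquePolyOn, hset, Finset.sum_union hdisj, Finset.sum_image hinj, cliquePolyOn]
  have hcard : ∀ t ∈ cliqueSetOn G s, (X : Polynomial ℤ) ^ (insert v t).card = X ^ t.card * X := by
    intro t ht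
    rw [Finset.card_insert_of_notMem (hvnot t ht), pow_succ]
  rw [Finset.sum_congr rfl hcard, ← Finset.sum_mul]
  ring

lemma IsThresholdOn.nonempty {s : Finset V} (h : IsThresholdOn G s) : s.Nonempty := by
  induction h with
  | single v => exact ⟨v, Finset.mem_singleton_self v⟩
  | isolated s v hv hs hiso ih => exact ⟨v, Finset.mem_insert_self v s⟩
  | dominating s v hv hs hdom ih => exact ⟨v, Finset.mem_insert_self v s⟩

lemma one_add_X_pow (k : ℕ) : ∃ q : Polynomial ℤ, (1 + X) ^ k = 1 + X * q := by
  induction k with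
  | zero => exact ⟨0, by simp⟩
  | succ n ih =>
    obtain ⟨q, hq⟩ := ih
    exact ⟨q + 1 + X * q, by rw [pow_succ, hq]; ring⟩

lemma threshold_main {s : Finset V} (h : IsThresholdOn G s) :
    ∃ (v : V) (D : Finset V) (R : Polynomial ℤ),
      v ∈ s ∧ D ⊆ s ∧ v ∉ D ∧ G.IsClique (↑(insert v D) : Set V) ∧
      (∀ u ∈ s, G.Adj v u ↔ u ∈ D) ∧
      cliquePolyOn G s = (1 + X) ^ D.card + X * (1 + X) ^ D.card * R ∧
      (s = insert v D ∨ ∃ w ∈ s, w ∉ D ∧ w ≠ v) := by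
  induction h with
  | single v =>
    refine ⟨v, ∅, 1, Finset.mem_singleton_self v, Finset.empty_subset _,
      Finset.notMem_empty v, by simp [SimpleGraph.IsClique], ?_, ?_, Or.inl (by simp)⟩
    · intro u hu
      rw [Finset.mem_singleton] at hu
      subst hu
      simp [SimpleGraph.irrefl]
    · rw [cliquePoly_single]; simp only [Finset.card_empty, pow_zero]; ring
  | isolated s v hv hs hiso ih =>
    obtain ⟨v0, D0, R0, _, _, _, _, _, hpoly0, _⟩ := ih
    obtain ⟨q, hq⟩ := one_add_X_pow D0.card
    obtain ⟨w, hw⟩ := hs.nonempty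
    refine ⟨v, ∅, q + (1 + X) ^ D0.card * R0 + 1, Finset.mem_insert_self v s,
      Finset.empty_subset _, Finset.notMem_empty v, by simp [SimpleGraph.IsClique], ?_, ?_, ?_⟩
    · intro u hu
      simp only [Finset.notMem_empty, iff_false]
      rcases Finset.mem_insert.mp hu with rfl | hus
      · exact G.irrefl
      · exact hiso u hus
    · rw [cliquePoly_isolated hv hiso, hpoly0, hq]
      simp only [Finset.card_empty, pow_zero]
      ring
    · refine Or.inr ⟨w, Finset.mem_insert_of_mem hw, Finset.notMem_empty w, ?_⟩
      rintro rfl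
      exact hv hw
  | dominating s v hv hs hdom ih =>
    obtain ⟨v0, D0, R0, hv0s, hD0s, hv0D0, hclq, hchar, hpoly0, hcase⟩ := ih
    have hvD0 : v ∉ D0 := fun h => hv (hD0s h)
    have hvv0 : v0 ≠ v := fun h => hv (h ▸ hv0s)
    refine ⟨v0, insert v D0, R0, Finset.mem_insert_of_mem hv0s,
      Finset.insert_subset_insert _ hD0s,
      ?_, ?_, ?_, ?_, ?_⟩
    · simp only [Finset.mem_insert]
      rintro (h | h)
      · exact hvv0 h
      · exact hv0D0 h
    · rw [Finset.insert_comm, Finset.coe_insert]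
      refine hclq.insert (fun u hu _ => ?_)
      rw [Finset.coe_insert, Set.mem_insert_iff] at hu
      rcases hu with rfl | hu
      · exact hdom u hv0s
      · exact hdom u (hD0s (by exact_mod_cast hu))
    · intro u hu
      rcases Finset.mem_insert.mp hu with rfl | hus
      · simp only [Finset.mem_insert, true_or, iff_true]
        exact (hdom v0 hv0s).symm
      · rw [hchar u hus, Finset.mem_insert]
        constructor
        · exact Or.inr
        · rintro (rfl | h)
          · exact absurd hus hv
          · exact h
    · rw [cliquePoly_dominating hv hdom, hpoly0, Finset.card_insert_of_notMem hvD0,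
        pow_succ]
      ring
    · rcases hcase with rfl | ⟨w, hws, hwD0, hwv0⟩
      · exact Or.inl (by rw [Finset.insert_comm])
      · refine Or.inr ⟨w, Finset.mem_insert_of_mem hws, ?_, hwv0⟩
        simp only [Finset.mem_insert]
        rintro (rfl | h)
        · exact hv hws
        · exact hwD0 h

end CliquePolyAux

lemma coeff_cliquePolyOn {V : Type*} [Fintype V] [DecidableEq V] (G : SimpleGraph V) (j : ℕ) :
    (cliquePolyOn G Finset.univ).coeff j = (cliqueCount G j : ℤ) := by
  classical
  rw [cliquePolyOn, finset_sum_coeff]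
  simp_rw [coeff_X_pow]
  rw [Finset.sum_boole]
  norm_cast
  rw [cliqueCount]
  have hset : {s : Finset V | G.IsNClique j s}
      = ↑((cliqueSetOn G Finset.univ).filter (fun t => j = t.card)) := by
    ext t
    simp only [Set.mem_setOf_eq, Finset.coe_filter, SimpleGraph.isNClique_iff,
      mem_cliqueSetOn]
    constructor
    · rintro ⟨h1, h2⟩; exact ⟨⟨Finset.subset_univ t, h1⟩, h2.symm⟩
    · rintro ⟨⟨_, h1⟩, h2⟩; exact ⟨h1, h2.symm⟩
  rw [hset, Set.ncard_coe_finset]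

lemma cliqueCount_zero {V : Type*} [Fintype V] (G : SimpleGraph V) : cliqueCount G 0 = 1 := by
  rw [cliqueCount]
  have : {s : Finset V | G.IsNClique 0 s} = {∅} := by
    ext t
    simp only [Set.mem_setOf_eq, SimpleGraph.isNClique_iff, Set.mem_singleton_iff,
      Finset.card_eq_zero]
    constructor
    · rintro ⟨_, h⟩; exact h
    · rintro rfl; exact ⟨by simp [SimpleGraph.IsClique], rfl⟩
  rw [this, Set.ncard_singleton]

lemma cliquePoly_eq_one_add_X_mul {V : Type} [Fintype V] [DecidableEq V] (T : SimpleGraph V)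
    (d : ℕ) (hdmax : ∀ (m : ℕ) (s : Finset V), T.IsNClique m s → m ≤ d) :
    cliquePolyOn T Finset.univ
      = 1 + X * ∑ i ∈ Finset.Icc 1 d, C ((cliqueCount T i : ℤ)) * X ^ (i - 1) := by
  have hbig : ∀ j, d < j → cliqueCount T j = 0 := by
    intro j hj
    rw [cliqueCount]
    have : {s : Finset V | T.IsNClique j s} = ∅ := by
      ext t
      simp only [Set.mem_setOf_eq, Set.mem_empty_iff_false, iff_false]
      intro h
      exact absurd (hdmax j t h) (Nat.not_le.mpr hj)
    rw [this, Set.ncard_empty]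
  ext n
  rw [coeff_cliquePolyOn]
  cases n with
  | zero =>
    rw [cliqueCount_zero]
    simp [coeff_add, coeff_one, mul_coeff_zero, coeff_X_zero]
  | succ n =>
    rw [coeff_add, coeff_one, if_neg (Nat.succ_ne_zero n), coeff_X_mul, finset_sum_coeff]
    simp_rw [coeff_C_mul, coeff_X_pow]
    rw [Finset.sum_eq_single (n + 1)]
    · simp
    · intro i2 hi2 hne
      rw [Finset.mem_Icc] at hi2
      rw [if_neg, mul_zero]
      intro h
      exact hne (by omega)
    · intro h
      rw [Finset.mem_Icc] at h
      have : cliqueCount T (n + 1) = 0 := hbig (n + 1) (by omega)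
      rw [this]
      simp


/-- For a non-complete threshold graph `T` with vertex connectivity `κ`, largest clique
size `d` and `b`-vector `b`, one has `b 1 = b 2 = ⋯ = b κ = 1`. -/
theorem stmt5 {V : Type} [Fintype V] [DecidableEq V] (T : SimpleGraph V)
    (hnc : T ≠ ⊤) (hth : IsThreshold T)
    (d : ℕ) (hd : ∃ s : Finset V, T.IsNClique d s)
    (hdmax : ∀ (m : ℕ) (s : Finset V), T.IsNClique m s → m ≤ d)
    (b : ℕ → ℤ)
    (hb : ∀ x : ℤ, ∑ i ∈ Finset.Icc 1 d, b i * (x + 1) ^ (i - 1) =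
      ∑ i ∈ Finset.Icc 1 d, (cliqueCount T i : ℤ) * x ^ (i - 1))
    (i : ℕ) (hi1 : 1 ≤ i) (hi2 : i ≤ vertexConnectivity T) :
    b i = 1 := by
  classical
  obtain ⟨v, D, R, hvU, hDU, hvD, hclq, hchar, hpoly, hcase⟩ := threshold_main hth
  have hcase' : ∃ w, w ∉ D ∧ w ≠ v := by
    rcases hcase with heq | ⟨w, _, hwD, hwv⟩
    · exfalso
      apply hnc
      ext a c
      simp only [SimpleGraph.top_adj]
      constructor
      · exact fun h => h.ne
      · intro hne
        have ha : a ∈ insert v D := heq ▸ Finset.mem_univ a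
        have hc : c ∈ insert v D := heq ▸ Finset.mem_univ c
        exact hclq (by exact_mod_cast ha) (by exact_mod_cast hc) hne
    · exact ⟨w, hwD, hwv⟩
  obtain ⟨w, hwD, hwv⟩ := hcase'
  have hvadj : ∀ u, T.Adj v u ↔ u ∈ D := fun u => hchar u (Finset.mem_univ u)
  have hcut : IsVertexCut T D := by
    intro hcon
    have hvmem : v ∈ (↑(Dᶜ) : Set V) := by simp [hvD]
    have hwmem : w ∈ (↑(Dᶜ) : Set V) := by simp [hwD]
    obtain ⟨p⟩ := hcon.preconnected ⟨v, hvmem⟩ ⟨w, hwmem⟩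
    have hne : (⟨v, hvmem⟩ : (↑(Dᶜ) : Set V)) ≠ ⟨w, hwmem⟩ := by
      simp only [ne_eq, Subtype.mk.injEq]
      exact fun h => hwv h.symm
    have hnotnil : ¬ p.Nil := SimpleGraph.Walk.not_nil_of_ne hne
    obtain ⟨u, hadj, q, -⟩ := SimpleGraph.Walk.not_nil_iff.mp hnotnil
    have hTadj : T.Adj v ↑u := hadj
    have hmem : (↑u : V) ∈ D := (hvadj _).mp hTadj
    have hmem' : (↑u : V) ∈ (↑(Dᶜ) : Set V) := u.2
    rw [Finset.mem_coe, Finset.mem_compl] at hmem'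
    exact hmem' hmem
  have hκ : vertexConnectivity T ≤ D.card := Nat.sInf_le ⟨D, hcut, rfl⟩
  set k := D.card with hk
  have hik : i ≤ k := hi2.trans hκ
  have hkd : k + 1 ≤ d := by
    refine hdmax (k + 1) (insert v D) ⟨hclq, ?_⟩
    rw [Finset.card_insert_of_notMem hvD]
  have hiIcc : i ∈ Finset.Icc 1 d := Finset.mem_Icc.mpr ⟨hi1, by omega⟩
  set Qpoly : Polynomial ℤ :=
    ∑ j ∈ Finset.Icc 1 d, C ((cliqueCount T j : ℤ)) * X ^ (j - 1) with hQdef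
  have hPQ : cliquePolyOn T Finset.univ = 1 + X * Qpoly :=
    cliquePoly_eq_one_add_X_mul T d hdmax
  have hBQ : (∑ j ∈ Finset.Icc 1 d, C (b j) * (X + 1) ^ (j - 1)) = Qpoly := by
    apply Polynomial.funext
    intro x
    simp only [hQdef, eval_finset_sum, eval_mul, eval_pow, eval_add, eval_C, eval_X,
      eval_one]
    exact hb x
  set Qc : Polynomial ℤ := Qpoly.comp (X - 1) with hQc
  have hbi : b i = Qc.coeff (i - 1) := by
    have h1 : (∑ j ∈ Finset.Icc 1 d, C (b j) * (X + 1) ^ (j - 1)).comp (X - 1) = Qc :=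
      by rw [hBQ]
    rw [Polynomial.sum_comp] at h1
    simp only [mul_comp, C_comp, pow_comp, add_comp, X_comp, one_comp,
      sub_add_cancel] at h1
    rw [← h1, finset_sum_coeff]
    simp_rw [coeff_C_mul, coeff_X_pow]
    rw [Finset.sum_eq_single i]
    · simp
    · intro j hj hne
      rw [Finset.mem_Icc] at hj
      rw [if_neg, mul_zero]
      intro h
      exact hne (by omega)
    · intro h
      exact absurd hiIcc h
  have h3 : (1 : Polynomial ℤ) + X * Qpoly = (1 + X) ^ k + X * (1 + X) ^ k * R := by
    rw [← hPQ, hpoly]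
  have h4 : (1 : Polynomial ℤ) + (X - 1) * Qc = X ^ k + (X - 1) * X ^ k * R.comp (X - 1) := by
    have := congrArg (fun p => p.comp (X - 1)) h3
    simp only [add_comp, mul_comp, X_comp, one_comp, pow_comp, sub_add_cancel] at this
    convert this using 2 <;> ring_nf
  have hgeq := geom_sum_mul (X : Polynomial ℤ) k
  have hX1ne : (X - 1 : Polynomial ℤ) ≠ 0 := by
    have := Polynomial.X_sub_C_ne_zero (1 : ℤ)
    simpa using this
  have hfac : (X - 1 : Polynomial ℤ) * Qc
      = (X - 1) * ((∑ j ∈ Finset.range k, X ^ j) + X ^ k * R.comp (X - 1)) := by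
    linear_combination h4 - hgeq
  have hQceq : Qc = (∑ j ∈ Finset.range k, X ^ j) + X ^ k * R.comp (X - 1) :=
    mul_left_cancel₀ hX1ne hfac
  rw [hbi, hQceq, coeff_add, finset_sum_coeff]
  simp_rw [coeff_X_pow]
  rw [Finset.sum_ite_eq (Finset.range k) (i - 1) (fun _ => (1 : ℤ))]
  rw [if_pos (Finset.mem_range.mpr (by omega)), mul_comm, coeff_mul_X_pow',
    if_neg (by omega), add_zero]
end
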